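/- Define a_2 : ℕ → ℕ by the recursion of Theorem 1.1 (with a(n) = 2^{Σ_{k ∈ bin(n)} k}): a_2(0) = a_2(1) = 0 and for n = 2^R + m, m < 2^R: a_2(n) = 2^R·a_2(m) + binom(2^{R-1},2)·a(m) if m < 2^{R-1}, else a_2(n) = 2^R·a_2(m) + (binom(2^{R-1},3) + 2^{R-1})·a(m)/2^{R-1}. Then for every n ≥ 1, a_2(n) admits the closed form a_2(n) = a(n) · Σ_{k ∈ bin'(n)} (2^{b(k)} + 2)(2^{k-1} - 1)/2^{k+1+b(k)}, where bin'(n) = bin(n)\{0} and b(k) ∈ {0,1} is the (k-1)-st binary digit of n; equivalently a_2(n) = Σ_{k ∈ bin'(n)} T_{k-1}(b_{k-1}+2)/(2^k · T_{k-1}(b_{k-1})) · a(n) with T as in Lemma 3.2. -/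

import Mathlib

/-- The set of positions of 1s in the binary expansion of `n`. -/
def binSet (n : ℕ) : Finset ℕ := (Finset.range (n + 1)).filter (fun i => n.testBit i)

/-- `a(n) = 2^{Σ_{k ∈ bin(n)} k}`. -/
def aOdd (n : ℕ) : ℕ := 2 ^ (∑ k ∈ binSet n, k)

/-- `T k w` counts `2^k`-tuples of 2-cores of total size `w`, for `w ≤ 3`
(Lemma 3.2): `T k 0 = 1`, `T k 1 = 2^k`, `T k 2 = C(2^k,2)`,
`T k 3 = C(2^k,3) + 2^k`. -/
def T (k w : ℕ) : ℕ :=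
  if w = 0 then 1
  else if w = 1 then 2 ^ k
  else if w = 2 then Nat.choose (2 ^ k) 2
  else if w = 3 then Nat.choose (2 ^ k) 3 + 2 ^ k
  else 0

/-- The `i`-th binary digit of `n`, as `0` or `1`. -/
def bit (n i : ℕ) : ℕ := if n.testBit i then 1 else 0

/-!
Split `n = 2^R + m` with `m < 2^R`. Then `bin(n) = bin(m) ∪ {R}` and `a(n) = 2^R a(m)`, and every
summand of the closed form with `k < R` is `2^R` times the corresponding summand for `m`, since the
digits below `R` are unchanged; the exactness of its division comes from
`2^k · T_{k-1}(b_{k-1}) = 2^{k + (k-1) b_{k-1}} ∣ a(m)`. The remaining summand `k = R` reduces to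
`T_{R-1}(b+2) a(m) / T_{R-1}(b)` with `b = b_{R-1}(m)`, which is exactly the inhomogeneous term of
the recursion in both of its cases.
-/

lemma mem_binSet {n i : ℕ} : i ∈ binSet n ↔ n.testBit i = true := by
  simp only [binSet, Finset.mem_filter, Finset.mem_range, and_iff_right_iff_imp]
  intro h
  have := Nat.ge_two_pow_of_testBit h
  have := Nat.lt_two_pow_self (n := i)
  omega

lemma binSet_zero : binSet 0 = ∅ := by
  ext i
  simp [mem_binSet]

lemma lt_of_mem_binSet {m R k : ℕ} (hm : m < 2 ^ R) (hk : k ∈ binSet m) : k < R :=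
  (Nat.pow_lt_pow_iff_right (by norm_num : 1 < 2)).mp
    ((Nat.ge_two_pow_of_testBit (mem_binSet.mp hk)).trans_lt hm)

lemma binSet_two_pow_add {R m : ℕ} (hm : m < 2 ^ R) :
    binSet (2 ^ R + m) = insert R (binSet m) := by
  ext i
  simp only [mem_binSet, Finset.mem_insert]
  rcases lt_trichotomy i R with hi | rfl | hi
  · rw [Nat.testBit_two_pow_add_gt hi]
    simp [hi.ne]
  · simp [Nat.testBit_two_pow_add_eq, Nat.testBit_lt_two_pow hm]
  · have hsum : 2 ^ R + m < 2 ^ i :=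
      calc 2 ^ R + m < 2 ^ (R + 1) := by rw [pow_succ]; omega
        _ ≤ 2 ^ i := Nat.pow_le_pow_right (by norm_num) hi
    rw [Nat.testBit_lt_two_pow hsum,
      Nat.testBit_lt_two_pow (hm.trans (Nat.pow_lt_pow_right (by norm_num) hi))]
    simp [hi.ne']

lemma aOdd_zero : aOdd 0 = 1 := by
  simp [aOdd, binSet_zero]

lemma aOdd_two_pow_add {R m : ℕ} (hm : m < 2 ^ R) : aOdd (2 ^ R + m) = 2 ^ R * aOdd m := by
  have hR : R ∉ binSet m := fun h => (lt_of_mem_binSet hm h).false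
  rw [aOdd, aOdd, binSet_two_pow_add hm, Finset.sum_insert hR, pow_add]

lemma two_pow_sum_dvd_aOdd {m : ℕ} {S : Finset ℕ} (hS : S ⊆ binSet m) :
    2 ^ (∑ i ∈ S, i) ∣ aOdd m :=
  pow_dvd_pow 2 (Finset.sum_le_sum_of_subset hS)

@[simp] lemma T_zero (k : ℕ) : T k 0 = 1 := rfl

@[simp] lemma T_one (k : ℕ) : T k 1 = 2 ^ k := rfl

@[simp] lemma T_two (k : ℕ) : T k 2 = Nat.choose (2 ^ k) 2 := rfl

@[simp] lemma T_three (k : ℕ) : T k 3 = Nat.choose (2 ^ k) 3 + 2 ^ k := rfl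

lemma bit_eq_zero_of_lt {m j : ℕ} (hm : m < 2 ^ j) : bit m j = 0 := by
  simp [bit, Nat.testBit_lt_two_pow hm]

lemma bit_eq_one_of_le_of_lt {m j : ℕ} (h₁ : 2 ^ j ≤ m) (h₂ : m < 2 ^ (j + 1)) :
    bit m j = 1 := by
  obtain ⟨r, rfl⟩ := Nat.exists_eq_add_of_le h₁
  have hr : r < 2 ^ j := by rw [pow_succ] at h₂; omega
  simp [bit, Nat.testBit_two_pow_add_eq, Nat.testBit_lt_two_pow hr]

lemma bit_two_pow_add_of_lt {R m i : ℕ} (hi : i < R) : bit (2 ^ R + m) i = bit m i := by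
  rw [bit, bit, Nat.testBit_two_pow_add_gt hi]

lemma two_pow_mul_T_bit_dvd_aOdd {m k : ℕ} (hk : k ∈ binSet m) (hk0 : k ≠ 0) :
    2 ^ k * T (k - 1) (bit m (k - 1)) ∣ aOdd m := by
  by_cases hb : m.testBit (k - 1)
  · have hpair : ({k - 1, k} : Finset ℕ) ⊆ binSet m := by
      simp [Finset.insert_subset_iff, mem_binSet.mpr hb, hk]
    have := two_pow_sum_dvd_aOdd hpair
    rw [Finset.sum_pair (by omega), pow_add, mul_comm] at this
    simpa [bit, hb] using this
  · simpa [bit, hb] using two_pow_sum_dvd_aOdd (S := {k}) (by simpa using hk)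

def closedFormTerm (n k : ℕ) : ℕ :=
  T (k - 1) (bit n (k - 1) + 2) * aOdd n / (2 ^ k * T (k - 1) (bit n (k - 1)))

def closedForm (n : ℕ) : ℕ := ∑ k ∈ (binSet n).erase 0, closedFormTerm n k

lemma closedFormTerm_two_pow_add_of_mem {R m k : ℕ} (hm : m < 2 ^ R)
    (hk : k ∈ (binSet m).erase 0) :
    closedFormTerm (2 ^ R + m) k = 2 ^ R * closedFormTerm m k := by
  obtain ⟨hk0, hkm⟩ := Finset.mem_erase.mp hk
  have hkR := lt_of_mem_binSet hm hkm
  rw [closedFormTerm, closedFormTerm, bit_two_pow_add_of_lt (by omega), aOdd_two_pow_add hm,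
    mul_left_comm, Nat.mul_div_assoc _ ((two_pow_mul_T_bit_dvd_aOdd hkm hk0).mul_left _)]

lemma closedFormTerm_two_pow_add_self {R m : ℕ} (hR : 1 ≤ R) (hm : m < 2 ^ R) :
    closedFormTerm (2 ^ R + m) R =
      T (R - 1) (bit m (R - 1) + 2) * aOdd m / T (R - 1) (bit m (R - 1)) := by
  rw [closedFormTerm, bit_two_pow_add_of_lt (by omega), aOdd_two_pow_add hm, mul_left_comm,
    Nat.mul_div_mul_left _ _ (by positivity)]

lemma closedForm_zero : closedForm 0 = 0 := by
  simp [closedForm, binSet_zero]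

lemma closedForm_one : closedForm 1 = 0 := by
  have : binSet 1 = {0} := by
    ext i
    simp [mem_binSet, Nat.testBit_one_eq_true_iff_self_eq_zero]
  simp [closedForm, this]

lemma closedForm_two_pow_add {R m : ℕ} (hR : 1 ≤ R) (hm : m < 2 ^ R) :
    closedForm (2 ^ R + m) = 2 ^ R * closedForm m + closedFormTerm (2 ^ R + m) R := by
  have hR' : R ∉ (binSet m).erase 0 := fun h =>
    (lt_of_mem_binSet hm (Finset.mem_of_mem_erase h)).false
  rw [closedForm, binSet_two_pow_add hm, Finset.erase_insert_of_ne (by omega),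
    Finset.sum_insert hR',
    Finset.sum_congr rfl fun k hk => closedFormTerm_two_pow_add_of_mem hm hk,
    ← Finset.mul_sum, closedForm, add_comm]

lemma exists_eq_two_pow_add {n : ℕ} (hn : 2 ≤ n) :
    ∃ R m, 1 ≤ R ∧ m < 2 ^ R ∧ n = 2 ^ R + m := by
  have hn0 : n ≠ 0 := by omega
  have hle := Nat.pow_log_le_self 2 hn0
  have hlt := Nat.lt_pow_succ_log_self (b := 2) (by norm_num) n
  rw [Nat.succ_eq_add_one, pow_succ] at hlt
  refine ⟨Nat.log 2 n, n - 2 ^ Nat.log 2 n, ?_, by omega, by omega⟩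
  exact (Nat.le_log_iff_pow_le (by norm_num) hn0).mpr (by simpa using hn)

theorem stmt_11_general (a₂ : ℕ → ℕ)
    (h0 : a₂ 0 = 0) (h1 : a₂ 1 = 0)
    (hrec1 : ∀ R m, 1 ≤ R → m < 2 ^ (R - 1) →
      a₂ (2 ^ R + m) = 2 ^ R * a₂ m + Nat.choose (2 ^ (R - 1)) 2 * aOdd m)
    (hrec2 : ∀ R m, 1 ≤ R → 2 ^ (R - 1) ≤ m → m < 2 ^ R →
      a₂ (2 ^ R + m) =
        2 ^ R * a₂ m + (Nat.choose (2 ^ (R - 1)) 3 + 2 ^ (R - 1)) * aOdd m / 2 ^ (R - 1))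
    (n : ℕ) :
    a₂ n = ∑ k ∈ (binSet n).erase 0,
      T (k - 1) (bit n (k - 1) + 2) * aOdd n / (2 ^ k * T (k - 1) (bit n (k - 1))) := by
  have hrec : ∀ R m, 1 ≤ R → m < 2 ^ R → a₂ (2 ^ R + m) =
      2 ^ R * a₂ m + T (R - 1) (bit m (R - 1) + 2) * aOdd m / T (R - 1) (bit m (R - 1)) := by
    intro R m hR hm
    rcases Nat.lt_or_ge m (2 ^ (R - 1)) with hlow | hhigh
    · simp [bit_eq_zero_of_lt hlow, hrec1 R m hR hlow]
    · have hm' : m < 2 ^ (R - 1 + 1) := by rwa [Nat.sub_add_cancel hR]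
      simp [bit_eq_one_of_le_of_lt hhigh hm', hrec2 R m hR hhigh hm]
  change a₂ n = closedForm n
  induction n using Nat.strong_induction_on with
  | _ n ih =>
  rcases Nat.lt_or_ge n 2 with hsmall | hn
  · interval_cases n
    · rw [h0, closedForm_zero]
    · rw [h1, closedForm_one]
  · obtain ⟨R, m, hR, hm, rfl⟩ := exists_eq_two_pow_add hn
    rw [hrec R m hR hm, ih m (by omega), closedForm_two_pow_add hR hm,
      closedFormTerm_two_pow_add_self hR hm]

/-- If `a₂` satisfies the recursion of Theorem 1.1, then for every `n ≥ 1`,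
`a₂(n) = Σ_{k ∈ bin'(n)} T_{k-1}(b_{k-1}+2)·a(n) / (2^k · T_{k-1}(b_{k-1}))`,
where all the divisions are exact. -/
theorem stmt_11 (a₂ : ℕ → ℕ)
    (h0 : a₂ 0 = 0) (h1 : a₂ 1 = 0)
    (hrec1 : ∀ R m, 1 ≤ R → m < 2 ^ (R - 1) →
      a₂ (2 ^ R + m) = 2 ^ R * a₂ m + Nat.choose (2 ^ (R - 1)) 2 * aOdd m)
    (hrec2 : ∀ R m, 1 ≤ R → 2 ^ (R - 1) ≤ m → m < 2 ^ R →
      a₂ (2 ^ R + m) =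
        2 ^ R * a₂ m + (Nat.choose (2 ^ (R - 1)) 3 + 2 ^ (R - 1)) * aOdd m / 2 ^ (R - 1))
    (n : ℕ) (hn : 1 ≤ n) :
    a₂ n = ∑ k ∈ (binSet n).erase 0,
      T (k - 1) (bit n (k - 1) + 2) * aOdd n / (2 ^ k * T (k - 1) (bit n (k - 1))) :=
  stmt_11_general a₂ h0 h1 hrec1 hrec2 n
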